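/- arXiv:1603.08430 — 2 statements merged into one kernel-verified Lean document; each statement's English description precedes it below -/
import Mathlib

section
/- Let G = (V1, V2, E) be a bipartite graph with |V1| = |V2| = n and E ≠ ∅, and let Ḡ be its co-bipartite complement; assume Ḡ is connected. Then the unsmoothened vertex attack tolerance of Ḡ satisfies τ̂(Ḡ) = min over (A,B) ∈ BK(G) of (2n − |A| − |B|)/|A|, which in turn equals (min over (A,B) ∈ BK(G) of (2n − |B|)/|A|) − 1. -/
open SimpleGraph

/-- The number of vertices of a largest connected component of the subgraph of `G`
induced on the vertex set `T`. -/
noncomputable def maxCompCard {V : Type*} [Fintype V] (G : SimpleGraph V) (T : Set V) : ℕ :=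
  sSup (Set.range fun C : (G.induce T).ConnectedComponent => Nat.card C.supp)

/-- The unsmoothened vertex attack tolerance `τ̂(G)`: the infimum over nonempty attack
sets `S` whose removal leaves at least one vertex outside the largest remaining component,
of `|S| / (|V ∖ S| - |C_max(V - S)|)`. -/
noncomputable def uvat {V : Type*} [Fintype V] [DecidableEq V] (G : SimpleGraph V) : ℝ :=
  sInf {x : ℝ | ∃ S : Finset V, S.Nonempty ∧
    maxCompCard G ((S : Set V))ᶜ < Sᶜ.card ∧
    x = (S.card : ℝ) / ((Sᶜ.card : ℝ) - (maxCompCard G ((S : Set V))ᶜ : ℝ))}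

/-- The co-bipartite complement of a bipartite graph with parts `α`, `β` and edge
relation `E : α → β → Prop`: both parts become cliques, and a cross pair is an edge
iff it is not an edge of the bipartite graph. -/
def cobip {α β : Type*} (E : α → β → Prop) : SimpleGraph (α ⊕ β) where
  Adj x y :=
    match x, y with
    | Sum.inl a, Sum.inl a' => a ≠ a'
    | Sum.inr b, Sum.inr b' => b ≠ b'
    | Sum.inl a, Sum.inr b => ¬ E a b
    | Sum.inr b, Sum.inl a => ¬ E a b
  symm := by
    constructor
    rintro (a | b) (a' | b') h
    · exact Ne.symm h
    · exact h
    · exact h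
    · exact Ne.symm h
  loopless := by
    constructor
    rintro (a | b) h
    · exact h rfl
    · exact h rfl

/-!
Removing a set `S` from `Ḡ` leaves `A ⊔ B` with `A ⊆ V₁`, `B ⊆ V₂`. Both `A` and `B` are cliques
of `Ḡ`, so `Ḡ[A ⊔ B]` is disconnected exactly when `A` and `B` are nonempty and `Ḡ` has no edge
between them, i.e. when `A × B` is a biclique of `G`; its components are then `A` and `B`. Hence
`|V ∖ S| - |C_max| = min |A| |B|` and `|S| = 2n - |A| - |B|`, so the admissible attack sets
correspond to the bicliques, except that the biclique `(V₁, V₂)` would give `S = ∅`: this is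
excluded because `Ḡ` is connected. The second formula is the first one shifted by
`(2n - |B|)/|A| - (2n - |A| - |B|)/|A| = 1`.
-/

open Finset

theorem SimpleGraph.Reachable.apply_eq_of_forall_adj {V γ : Type*} {G : SimpleGraph V}
    {f : V → γ} (hf : ∀ u v, G.Adj u v → f u = f v) {u v : V} (h : G.Reachable u v) :
    f u = f v := by
  obtain ⟨p⟩ := h
  induction p with
  | nil => rfl
  | cons h _ ih => exact (hf _ _ h).trans ih

theorem maxCompCard_eq_of_preconnected {V : Type*} [Fintype V] {G : SimpleGraph V} {T : Set V}
    (h : (G.induce T).Preconnected) : maxCompCard G T = Nat.card T := by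
  rcases isEmpty_or_nonempty T with hT | ⟨v⟩
  · simp [maxCompCard, Set.range_eq_empty]
  · have hsupp : ∀ C : (G.induce T).ConnectedComponent, C.supp = Set.univ := fun C =>
      Set.eq_univ_of_forall fun w => by
        rw [h.subsingleton_connectedComponent.elim C ((G.induce T).connectedComponentMk w)]
        rfl
    have hrange : Set.range (fun C : (G.induce T).ConnectedComponent => Nat.card C.supp) =
        {Nat.card T} := by
      simp [hsupp]
    rw [maxCompCard, hrange, csSup_singleton]

theorem csInf_image_add_const {s : Set ℝ} (hne : s.Nonempty) (hbdd : BddBelow s) (c : ℝ) :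
    sInf ((· + c) '' s) = sInf s + c :=
  ((OrderIso.addRight c).map_csInf' hne hbdd).symm

theorem div_add_sub_max_eq_div_min (c : ℝ) (a b : ℕ) :
    (c - a - b) / (((a + b : ℕ) : ℝ) - (max a b : ℕ)) =
      (c - (min a b : ℕ) - (max a b : ℕ)) / (min a b : ℕ) := by
  rcases le_total a b with h | h
  · simp [h]
  · simp [h]
    ring

section cobip

variable {α β : Type*} {E : α → β → Prop}

@[simp]
theorem cobip_adj_inl_inl {a a' : α} : (cobip E).Adj (.inl a) (.inl a') ↔ a ≠ a' := Iff.rfl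

@[simp]
theorem cobip_adj_inr_inr {b b' : β} : (cobip E).Adj (.inr b) (.inr b') ↔ b ≠ b' := Iff.rfl

@[simp]
theorem cobip_adj_inl_inr {a : α} {b : β} : (cobip E).Adj (.inl a) (.inr b) ↔ ¬ E a b := Iff.rfl

@[simp]
theorem cobip_adj_inr_inl {a : α} {b : β} : (cobip E).Adj (.inr b) (.inl a) ↔ ¬ E a b := Iff.rfl

theorem reachable_induce_cobip_of_isLeft_eq {T : Set (α ⊕ β)} {x y : T}
    (h : x.1.isLeft = y.1.isLeft) : ((cobip E).induce T).Reachable x y := by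
  by_cases hxy : x = y
  · exact hxy ▸ Reachable.refl x
  refine Adj.reachable ?_
  obtain ⟨a | b, _⟩ := x <;> obtain ⟨a' | b', _⟩ := y <;> simp_all

theorem isLeft_eq_of_reachable_induce_cobip {T : Set (α ⊕ β)}
    (hT : ∀ a b, .inl a ∈ T → .inr b ∈ T → E a b) {x y : T}
    (h : ((cobip E).induce T).Reachable x y) : x.1.isLeft = y.1.isLeft :=
  h.apply_eq_of_forall_adj (f := fun z : T => z.1.isLeft) fun ⟨u, hu⟩ ⟨v, hv⟩ huv => by
    cases u <;> cases v <;> simp_all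

theorem preconnected_induce_cobip {T : Set (α ⊕ β)}
    (h : ∀ a b, .inl a ∈ T → .inr b ∈ T →
      ∃ a' b', .inl a' ∈ T ∧ .inr b' ∈ T ∧ ¬ E a' b') :
    ((cobip E).induce T).Preconnected := by
  have cross : ∀ a b (ha : .inl a ∈ T) (hb : .inr b ∈ T),
      ((cobip E).induce T).Reachable ⟨.inl a, ha⟩ ⟨.inr b, hb⟩ := by
    intro a b ha hb
    obtain ⟨a', b', ha', hb', hab'⟩ := h a b ha hb
    have left : ((cobip E).induce T).Reachable ⟨.inl a, ha⟩ ⟨.inl a', ha'⟩ :=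
      reachable_induce_cobip_of_isLeft_eq rfl
    have right : ((cobip E).induce T).Reachable ⟨.inr b', hb'⟩ ⟨.inr b, hb⟩ :=
      reachable_induce_cobip_of_isLeft_eq rfl
    exact left.trans ((Adj.reachable hab').trans right)
  rintro ⟨a | b, hx⟩ ⟨a' | b', hy⟩
  · exact reachable_induce_cobip_of_isLeft_eq rfl
  · exact cross a b' hx hy
  · exact (cross a' b hy hx).symm
  · exact reachable_induce_cobip_of_isLeft_eq rfl

theorem preconnected_induce_cobip_disjSum {A : Finset α} {B : Finset β}
    (h : ¬ (A.Nonempty ∧ B.Nonempty ∧ ∀ a ∈ A, ∀ b ∈ B, E a b)) :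
    ((cobip E).induce (A.disjSum B : Set (α ⊕ β))).Preconnected := by
  refine preconnected_induce_cobip fun a b ha hb => ?_
  simp only [mem_coe, inl_mem_disjSum, inr_mem_disjSum] at ha hb ⊢
  by_contra! hAB
  exact h ⟨⟨a, ha⟩, ⟨b, hb⟩, fun a ha b hb => hAB a b ha hb⟩

theorem supp_connectedComponentMk_induce_cobip {T : Set (α ⊕ β)}
    (hT : ∀ a b, .inl a ∈ T → .inr b ∈ T → E a b) (v : T) :
    (((cobip E).induce T).connectedComponentMk v).supp = {w | w.1.isLeft = v.1.isLeft} := by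
  ext w
  rw [ConnectedComponent.mem_supp_iff, ConnectedComponent.eq]
  exact ⟨isLeft_eq_of_reachable_induce_cobip hT, reachable_induce_cobip_of_isLeft_eq⟩

theorem card_setOf_isLeft_disjSum (A : Finset α) (B : Finset β) :
    Nat.card {w : (A.disjSum B : Set (α ⊕ β)) | w.1.isLeft} = #A := by
  have : {w : (A.disjSum B : Set (α ⊕ β)) | w.1.isLeft} = Subtype.val ⁻¹' (.inl '' A) := by
    ext ⟨a | b, h⟩
    · simpa using h
    · simp
  rw [this, Nat.card_coe_set_eq, Set.ncard_preimage_of_injective_subset_range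
    Subtype.val_injective (by rintro _ ⟨a, ha, rfl⟩; simpa using ha),
    Set.ncard_image_of_injective _ Sum.inl_injective, Set.ncard_coe_finset]

theorem card_setOf_not_isLeft_disjSum (A : Finset α) (B : Finset β) :
    Nat.card {w : (A.disjSum B : Set (α ⊕ β)) | w.1.isLeft = false} = #B := by
  have : {w : (A.disjSum B : Set (α ⊕ β)) | w.1.isLeft = false} =
      Subtype.val ⁻¹' (.inr '' B) := by
    ext ⟨a | b, h⟩
    · simp
    · simpa using h
  rw [this, Nat.card_coe_set_eq, Set.ncard_preimage_of_injective_subset_range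
    Subtype.val_injective (by rintro _ ⟨b, hb, rfl⟩; simpa using hb),
    Set.ncard_image_of_injective _ Sum.inr_injective, Set.ncard_coe_finset]

theorem maxCompCard_cobip_disjSum [Fintype α] [Fintype β] {A : Finset α} {B : Finset β}
    (hA : A.Nonempty) (hB : B.Nonempty) (hAB : ∀ a ∈ A, ∀ b ∈ B, E a b) :
    maxCompCard (cobip E) (A.disjSum B) = max #A #B := by
  set T : Set (α ⊕ β) := ↑(A.disjSum B)
  have hsupp := supp_connectedComponentMk_induce_cobip (E := E) (T := T)
    fun a b ha hb => hAB a (by simpa [T] using ha) b (by simpa [T] using hb)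
  have hleft : ∀ a (ha : .inl a ∈ T),
      Nat.card (((cobip E).induce T).connectedComponentMk ⟨.inl a, ha⟩).supp = #A :=
    fun a ha => by rw [hsupp]; exact card_setOf_isLeft_disjSum A B
  have hright : ∀ b (hb : .inr b ∈ T),
      Nat.card (((cobip E).induce T).connectedComponentMk ⟨.inr b, hb⟩).supp = #B :=
    fun b hb => by rw [hsupp]; exact card_setOf_not_isLeft_disjSum A B
  have hrange : Set.range (fun C : ((cobip E).induce T).ConnectedComponent => Nat.card C.supp) =
      {#A, #B} := by
    ext m
    constructor
    · rintro ⟨C, rfl⟩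
      induction C using ConnectedComponent.ind with | h v => ?_
      obtain ⟨a | b, hv⟩ := v
      exacts [.inl (hleft a hv), .inr (hright b hv)]
    · obtain ⟨a, ha⟩ := hA
      obtain ⟨b, hb⟩ := hB
      rintro (rfl | rfl)
      exacts [⟨_, hleft a (by simpa [T] using ha)⟩, ⟨_, hright b (by simpa [T] using hb)⟩]
  rw [maxCompCard, hrange, csSup_pair]

end cobip

section values

variable {α β : Type*} {E : α → β → Prop}

def bicliqueValues (E : α → β → Prop) (f : ℕ → ℕ → ℝ) : Set ℝ :=
  {x | ∃ (A : Finset α) (B : Finset β), A.Nonempty ∧ B.Nonempty ∧ (∀ a ∈ A, ∀ b ∈ B, E a b) ∧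
    x = f (min #A #B) (max #A #B)}

/-- `f |A| |B|` over the pairs `(A, B) ∈ BK(G)`. -/
def bkValues (E : α → β → Prop) (f : ℕ → ℕ → ℝ) : Set ℝ :=
  {x | (∃ (A : Finset α) (B : Finset β), A.Nonempty ∧ B.Nonempty ∧ #A ≤ #B ∧
      (∀ a ∈ A, ∀ b ∈ B, E a b) ∧ x = f #A #B) ∨
    (∃ (A : Finset β) (B : Finset α), A.Nonempty ∧ B.Nonempty ∧ #A ≤ #B ∧
      (∀ a ∈ A, ∀ b ∈ B, E b a) ∧ x = f #A #B)}

theorem bicliqueValues_eq_bkValues (f : ℕ → ℕ → ℝ) : bicliqueValues E f = bkValues E f := by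
  ext x
  constructor
  · rintro ⟨A, B, hA, hB, hAB, rfl⟩
    rcases le_total #A #B with h | h
    · exact .inl ⟨A, B, hA, hB, h, hAB, by rw [min_eq_left h, max_eq_right h]⟩
    · exact .inr ⟨B, A, hB, hA, h, fun b hb a ha => hAB a ha b hb,
        by rw [min_eq_right h, max_eq_left h]⟩
  · rintro (⟨A, B, hA, hB, h, hAB, rfl⟩ | ⟨A, B, hA, hB, h, hAB, rfl⟩)
    · exact ⟨A, B, hA, hB, hAB, by rw [min_eq_left h, max_eq_right h]⟩
    · exact ⟨B, A, hB, hA, fun a ha b hb => hAB b hb a ha, by rw [min_eq_right h, max_eq_left h]⟩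

theorem bicliqueValues_eq_image {f g : ℕ → ℕ → ℝ} (φ : ℝ → ℝ)
    (h : ∀ a b, 0 < a → g a b = φ (f a b)) : bicliqueValues E g = φ '' bicliqueValues E f := by
  ext x
  constructor
  · rintro ⟨A, B, hA, hB, hAB, rfl⟩
    exact ⟨_, ⟨A, B, hA, hB, hAB, rfl⟩, (h _ _ (lt_min hA.card_pos hB.card_pos)).symm⟩
  · rintro ⟨_, ⟨A, B, hA, hB, hAB, rfl⟩, rfl⟩
    exact ⟨A, B, hA, hB, hAB, (h _ _ (lt_min hA.card_pos hB.card_pos)).symm⟩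

theorem bicliqueValues_nonempty (hE : ∃ a b, E a b) (f : ℕ → ℕ → ℝ) :
    (bicliqueValues E f).Nonempty := by
  obtain ⟨a, b, hab⟩ := hE
  exact ⟨_, {a}, {b}, singleton_nonempty a, singleton_nonempty b, by simpa using hab, rfl⟩

theorem bicliqueValues_finite [Finite α] [Finite β] (E : α → β → Prop) (f : ℕ → ℕ → ℝ) :
    (bicliqueValues E f).Finite :=
  (Set.finite_range fun p : Finset α × Finset β => f (min #p.1 #p.2) (max #p.1 #p.2)).subset
    fun _ ⟨A, B, _, _, _, hx⟩ => ⟨(A, B), hx.symm⟩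

end values

section uvat

variable {α β : Type*} [Fintype α] [Fintype β] [DecidableEq α] [DecidableEq β]
  {E : α → β → Prop}

theorem card_eq_of_compl_eq_disjSum {S : Finset (α ⊕ β)} {A : Finset α} {B : Finset β}
    (h : Sᶜ = A.disjSum B) : (#S : ℝ) = Fintype.card (α ⊕ β) - #A - #B := by
  have := card_add_card_compl S
  rw [h, card_disjSum] at this
  rw [← this]
  push_cast
  ring

theorem cutRatio_mem_bicliqueValues {S : Finset (α ⊕ β)}
    (hlt : maxCompCard (cobip E) (S : Set (α ⊕ β))ᶜ < #Sᶜ) :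
    (#S : ℝ) / ((#Sᶜ : ℝ) - (maxCompCard (cobip E) (S : Set (α ⊕ β))ᶜ : ℝ)) ∈
      bicliqueValues E fun a b => ((Fintype.card (α ⊕ β) : ℝ) - a - b) / a := by
  have hS : Sᶜ = Sᶜ.toLeft.disjSum Sᶜ.toRight := Sᶜ.toLeft_disjSum_toRight.symm
  set A := Sᶜ.toLeft
  set B := Sᶜ.toRight
  rw [← coe_compl, hS] at hlt ⊢
  obtain ⟨hA, hB, hAB⟩ : A.Nonempty ∧ B.Nonempty ∧ ∀ a ∈ A, ∀ b ∈ B, E a b := by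
    by_contra h
    rw [maxCompCard_eq_of_preconnected (preconnected_induce_cobip_disjSum h),
      Nat.card_coe_set_eq, Set.ncard_coe_finset] at hlt
    exact lt_irrefl _ hlt
  refine ⟨A, B, hA, hB, hAB, ?_⟩
  rw [maxCompCard_cobip_disjSum hA hB hAB, card_eq_of_compl_eq_disjSum hS, card_disjSum,
    div_add_sub_max_eq_div_min]

theorem exists_cut_of_biclique (hconn : (cobip E).Connected) {A : Finset α} {B : Finset β}
    (hA : A.Nonempty) (hB : B.Nonempty) (hAB : ∀ a ∈ A, ∀ b ∈ B, E a b) :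
    ∃ S : Finset (α ⊕ β), S.Nonempty ∧ maxCompCard (cobip E) (S : Set (α ⊕ β))ᶜ < #Sᶜ ∧
      ((Fintype.card (α ⊕ β) : ℝ) - (min #A #B : ℕ) - (max #A #B : ℕ)) / (min #A #B : ℕ) =
        (#S : ℝ) / ((#Sᶜ : ℝ) - (maxCompCard (cobip E) (S : Set (α ⊕ β))ᶜ : ℝ)) := by
  have hS : (A.disjSum B)ᶜᶜ = A.disjSum B := compl_compl _
  have hlt : maxCompCard (cobip E) (A.disjSum B) < #(A.disjSum B) := by
    rw [maxCompCard_cobip_disjSum hA hB hAB, card_disjSum]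
    have := hA.card_pos
    have := hB.card_pos
    omega
  refine ⟨(A.disjSum B)ᶜ, ?_, by rwa [← coe_compl, hS], ?_⟩
  · rw [nonempty_iff_ne_empty, Ne, compl_eq_empty_iff]
    intro huniv
    rw [huniv, coe_univ, maxCompCard_eq_of_preconnected
      ((induceUnivIso _).preconnected_iff.2 hconn.preconnected)] at hlt
    simp at hlt
  · rw [← coe_compl, hS, maxCompCard_cobip_disjSum hA hB hAB, card_eq_of_compl_eq_disjSum hS,
      card_disjSum, div_add_sub_max_eq_div_min]

theorem uvat_cobip (hconn : (cobip E).Connected) :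
    uvat (cobip E) =
      sInf (bicliqueValues E fun a b => ((Fintype.card (α ⊕ β) : ℝ) - a - b) / a) := by
  rw [uvat]
  congr 1
  ext x
  constructor
  · rintro ⟨S, -, hlt, rfl⟩
    exact cutRatio_mem_bicliqueValues hlt
  · rintro ⟨A, B, hA, hB, hAB, rfl⟩
    exact exists_cut_of_biclique hconn hA hB hAB

end uvat

/-- Part (I) of the main lemma: for a bipartite graph `G` with parts of size `n` and at
least one edge, whose co-bipartite complement is connected, the unsmoothened vertex attack
tolerance of the co-bipartite complement equals the minimum over bipartite cliques
`(A,B) ∈ BK(G)` (with `|A| ≤ |B|`, either orientation of the parts) of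
`(2n - |A| - |B|)/|A|`, which equals the corresponding minimum of `(2n - |B|)/|A|` minus 1. -/
theorem uvat_cobip_eq_min_over_bicliques
    {α β : Type*} [Fintype α] [Fintype β] [DecidableEq α] [DecidableEq β]
    (n : ℕ) (hcard1 : Fintype.card α = n) (hcard2 : Fintype.card β = n)
    (E : α → β → Prop) (hE : ∃ a b, E a b) (hconn : (cobip E).Connected) :
    uvat (cobip E) =
      sInf {x : ℝ |
        (∃ (A : Finset α) (B : Finset β), A.Nonempty ∧ B.Nonempty ∧ A.card ≤ B.card ∧
          (∀ a ∈ A, ∀ b ∈ B, E a b) ∧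
          x = ((2 * n : ℝ) - A.card - B.card) / (A.card : ℝ)) ∨
        (∃ (A : Finset β) (B : Finset α), A.Nonempty ∧ B.Nonempty ∧ A.card ≤ B.card ∧
          (∀ a ∈ A, ∀ b ∈ B, E b a) ∧
          x = ((2 * n : ℝ) - A.card - B.card) / (A.card : ℝ))} ∧
    uvat (cobip E) =
      sInf {x : ℝ |
        (∃ (A : Finset α) (B : Finset β), A.Nonempty ∧ B.Nonempty ∧ A.card ≤ B.card ∧
          (∀ a ∈ A, ∀ b ∈ B, E a b) ∧
          x = ((2 * n : ℝ) - B.card) / (A.card : ℝ)) ∨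
        (∃ (A : Finset β) (B : Finset α), A.Nonempty ∧ B.Nonempty ∧ A.card ≤ B.card ∧
          (∀ a ∈ A, ∀ b ∈ B, E b a) ∧
          x = ((2 * n : ℝ) - B.card) / (A.card : ℝ))} - 1 := by
  have hV : (Fintype.card (α ⊕ β) : ℝ) = 2 * n := by
    rw [Fintype.card_sum, hcard1, hcard2]
    push_cast
    ring
  have hτ : uvat (cobip E) = sInf (bicliqueValues E fun a b => ((2 * n : ℝ) - a - b) / a) := by
    rw [uvat_cobip hconn, hV]
  have hshift : bicliqueValues E (fun a b => ((2 * n : ℝ) - b) / a) =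
      (· + 1) '' bicliqueValues E (fun a b => ((2 * n : ℝ) - a - b) / a) :=
    bicliqueValues_eq_image _ fun a b ha => by field_simp; ring
  have hτ' : uvat (cobip E) = sInf (bkValues E fun a b => ((2 * n : ℝ) - b) / a) - 1 := by
    rw [← bicliqueValues_eq_bkValues, hshift, csInf_image_add_const (bicliqueValues_nonempty hE _)
      (bicliqueValues_finite E _).bddBelow, hτ, add_sub_cancel_right]
  exact ⟨hτ.trans (congrArg sInf (bicliqueValues_eq_bkValues _)), hτ'⟩
end

section
/- Let G = (V1, V2, E) be a bipartite graph with |V1| = |V2| = n and E ≠ ∅, let Ḡ be its co-bipartite complement, and assume Ḡ is connected. Let k be the size of a maximum balanced bipartite clique of G. Then τ̂(Ḡ) ≥ n/k − 1. -/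
open SimpleGraph

/-- `G` (with edge relation `E`) contains a balanced bipartite clique of size `k`:
sets `A ⊆ V₁`, `B ⊆ V₂` with `|A| = |B| = k` and all pairs adjacent. -/
def isBalancedClique {α β : Type*} (E : α → β → Prop) (k : ℕ) : Prop :=
  ∃ (A : Finset α) (B : Finset β), A.card = k ∧ B.card = k ∧ ∀ a ∈ A, ∀ b ∈ B, E a b

/-! Removing `S` from `Ḡ` leaves the two cliques `A = V₁ ∖ S` and `B = V₂ ∖ S`. If some pair of
`A × B` is a non-edge of `G`, it is an edge of `Ḡ` joining the two cliques, and nothing is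
disconnected; otherwise `A × B` is a biclique of `G`, so `min |A| |B| ≤ k`. The largest
remaining component has at least `max |A| |B|` vertices, so at most `min |A| |B| ≤ k`
vertices are cut off, while `|S| = 2n - |A| - |B| ≥ n - k`. -/

open Finset

lemma SimpleGraph.IsClique.reachable_induce {V : Type*} {G : SimpleGraph V} {s T : Set V}
    (hs : G.IsClique s) {u v : V} (hus : u ∈ s) (hvs : v ∈ s) (hu : u ∈ T) (hv : v ∈ T) :
    (G.induce T).Reachable ⟨u, hu⟩ ⟨v, hv⟩ := by
  by_cases huv : u = v
  · subst huv
    rfl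
  · exact Adj.reachable (induce_adj.mpr (hs hus hvs huv))

lemma not_reachable_induce_pair {V : Type*} [DecidableEq V] (G : SimpleGraph V) {u v : V}
    (huv : u ≠ v) (h : ¬ G.Adj u v) :
    ¬ (G.induce (({u, v} : Finset V) : Set V)).Reachable ⟨u, by simp⟩ ⟨v, by simp⟩ := by
  have hbot : G.induce (({u, v} : Finset V) : Set V) = ⊥ := by
    ext ⟨x, hx⟩ ⟨y, hy⟩
    simp only [coe_insert, coe_singleton, Set.mem_insert_iff, Set.mem_singleton_iff] at hx hy
    simp only [induce_adj, bot_adj, iff_false]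
    rcases hx with rfl | rfl <;> rcases hy with rfl | rfl
    exacts [G.loopless.irrefl _, h, fun h' => h h'.symm, G.loopless.irrefl _]
  rw [hbot, reachable_bot]
  exact fun h' => huv (congrArg Subtype.val h')

section maxCompCard

variable {V : Type*} [Fintype V] (G : SimpleGraph V)

lemma le_maxCompCard (T : Set V) (c : (G.induce T).ConnectedComponent) :
    Nat.card c.supp ≤ maxCompCard G T :=
  le_csSup ⟨Nat.card T, by
    rintro _ ⟨c', rfl⟩
    exact Nat.card_le_card_of_injective _ Subtype.val_injective⟩ ⟨c, rfl⟩

lemma maxCompCard_le {T : Set V} {m : ℕ}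
    (h : ∀ c : (G.induce T).ConnectedComponent, Nat.card c.supp ≤ m) : maxCompCard G T ≤ m :=
  csSup_le' <| by
    rintro _ ⟨c, rfl⟩
    exact h c

lemma card_le_maxCompCard_of_reachable {T U : Finset V} (hUT : U ⊆ T)
    (hU : ∀ u (hu : u ∈ U) v (hv : v ∈ U),
      (G.induce (T : Set V)).Reachable ⟨u, hUT hu⟩ ⟨v, hUT hv⟩) :
    #U ≤ maxCompCard G T := by
  obtain rfl | ⟨u₀, hu₀⟩ := U.eq_empty_or_nonempty
  · simp
  let c := (G.induce (T : Set V)).connectedComponentMk ⟨u₀, hUT hu₀⟩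
  let f : U → c.supp := fun u => ⟨⟨u, hUT u.2⟩,
    ConnectedComponent.sound (hU u u.2 u₀ hu₀)⟩
  have hf : Function.Injective f := fun u v huv => Subtype.ext (congrArg (·.1.1) huv)
  calc #U = Nat.card U := (Nat.card_eq_finsetCard U).symm
    _ ≤ Nat.card c.supp := Nat.card_le_card_of_injective f hf
    _ ≤ maxCompCard G T := le_maxCompCard G _ c

lemma maxCompCard_lt_card {T : Finset V} {u v : V} (hu : u ∈ T) (hv : v ∈ T)
    (huv : ¬ (G.induce (T : Set V)).Reachable ⟨u, hu⟩ ⟨v, hv⟩) : maxCompCard G T < #T := by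
  refine (maxCompCard_le G fun c => ?_).trans_lt (Nat.sub_lt (card_pos.mpr ⟨u, hu⟩) one_pos)
  obtain ⟨x, hx⟩ : ∃ x, x ∉ c.supp := by
    by_contra! hall
    exact huv (ConnectedComponent.exact ((hall _).trans (hall _).symm))
  have hlt : c.supp.ncard < (Set.univ : Set (T : Set V)).ncard :=
    Set.ncard_lt_ncard (Set.ssubset_univ_iff.mpr fun h => hx (h ▸ trivial))
  rw [Set.ncard_univ, Nat.card_coe_set_eq, Set.ncard_coe_finset] at hlt
  rw [Nat.card_coe_set_eq]
  omega

end maxCompCard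

lemma SimpleGraph.IsClique.card_le_maxCompCard {V : Type*} [Fintype V] {G : SimpleGraph V}
    {T U : Finset V} (hU : G.IsClique (U : Set V)) (hUT : U ⊆ T) : #U ≤ maxCompCard G T :=
  card_le_maxCompCard_of_reachable G hUT fun _ hu _ hv => hU.reachable_induce hu hv _ _

lemma exists_attack_of_not_adj {V : Type*} [Fintype V] [DecidableEq V] {G : SimpleGraph V}
    {u v : V} (huv : u ≠ v) (h : ¬ G.Adj u v) (hV : 2 < Fintype.card V) :
    ∃ S : Finset V, S.Nonempty ∧ maxCompCard G (S : Set V)ᶜ < #Sᶜ := by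
  refine ⟨{u, v}ᶜ, ?_, ?_⟩
  · rw [← card_pos, card_compl, card_pair huv]
    omega
  · rw [← coe_compl, compl_compl]
    exact maxCompCard_lt_card G (by simp) (by simp) (not_reachable_induce_pair G huv h)

/-- The alternative `c ≤ 0` covers graphs without admissible attack sets, where `uvat` is the junk
value `sInf ∅ = 0`. -/
lemma le_uvat {V : Type*} [Fintype V] [DecidableEq V] (G : SimpleGraph V) {c : ℝ}
    (h : ∀ S : Finset V, S.Nonempty → maxCompCard G (S : Set V)ᶜ < #Sᶜ →
      c ≤ #S / (#Sᶜ - maxCompCard G (S : Set V)ᶜ : ℝ))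
    (hc : c ≤ 0 ∨ ∃ S : Finset V, S.Nonempty ∧ maxCompCard G (S : Set V)ᶜ < #Sᶜ) :
    c ≤ uvat G := by
  refine hc.elim (Real.le_sInf ?_) fun ⟨S, hS, hSM⟩ => le_csInf ⟨_, S, hS, hSM, rfl⟩ ?_
  all_goals
    rintro _ ⟨S, hS, hSM, rfl⟩
    exact h S hS hSM

lemma sub_one_le_div {n k s d : ℝ} (hd : 0 < d) (hdk : d ≤ k) (hs : 0 ≤ s) (hns : n - k ≤ s) :
    n / k - 1 ≤ s / d := by
  rw [div_sub_one (hd.trans_le hdk).ne']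
  rcases le_or_gt (n - k) 0 with hnk | hnk
  · exact (div_nonpos_of_nonpos_of_nonneg hnk (hd.le.trans hdk)).trans (div_nonneg hs hd.le)
  · calc (n - k) / k ≤ (n - k) / d := div_le_div_of_nonneg_left hnk.le hd hdk
      _ ≤ s / d := div_le_div_of_nonneg_right hns hd.le

section cobip

variable {α β : Type*} (E : α → β → Prop)

lemma cobip_isClique_range_inl : (cobip E).IsClique (Set.range Sum.inl) := by
  rintro _ ⟨a, rfl⟩ _ ⟨a', rfl⟩ h
  exact fun ha => h (congrArg Sum.inl ha)

lemma cobip_isClique_range_inr : (cobip E).IsClique (Set.range Sum.inr) := by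
  rintro _ ⟨b, rfl⟩ _ ⟨b', rfl⟩ h
  exact fun hb => h (congrArg Sum.inr hb)

lemma isBalancedClique_min {A : Finset α} {B : Finset β} (h : ∀ a ∈ A, ∀ b ∈ B, E a b) :
    isBalancedClique E (min #A #B) := by
  rcases le_total #A #B with hAB | hBA
  · obtain ⟨B', hB', hcard⟩ := exists_subset_card_eq hAB
    exact ⟨A, B', (min_eq_left hAB).symm, by rw [hcard, min_eq_left hAB],
      fun a ha b hb => h a ha b (hB' hb)⟩
  · obtain ⟨A', hA', hcard⟩ := exists_subset_card_eq hBA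
    exact ⟨A', B, by rw [hcard, min_eq_right hBA], (min_eq_right hBA).symm,
      fun a ha b hb => h a (hA' ha) b hb⟩

variable [Fintype α] [Fintype β]

lemma card_toLeft_le_maxCompCard (T : Finset (α ⊕ β)) :
    #T.toLeft ≤ maxCompCard (cobip E) T := by
  rw [← card_map Function.Embedding.inl]
  refine (cobip_isClique_range_inl E).subset ?_ |>.card_le_maxCompCard
    (map_inl_subset_iff_subset_toLeft.mpr subset_rfl)
  simp

lemma card_toRight_le_maxCompCard (T : Finset (α ⊕ β)) :
    #T.toRight ≤ maxCompCard (cobip E) T := by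
  rw [← card_map Function.Embedding.inr]
  refine (cobip_isClique_range_inr E).subset ?_ |>.card_le_maxCompCard
    (map_inr_subset_iff_subset_toRight.mpr subset_rfl)
  simp

lemma card_le_maxCompCard_add_min (T : Finset (α ⊕ β)) :
    #T ≤ maxCompCard (cobip E) T + min #T.toLeft #T.toRight := by
  have := card_toLeft_le_maxCompCard E T
  have := card_toRight_le_maxCompCard E T
  have := card_toLeft_add_card_toRight (u := T)
  omega

lemma card_le_maxCompCard_of_not_rel {T : Finset (α ⊕ β)} {a : α} {b : β}
    (ha : Sum.inl a ∈ T) (hb : Sum.inr b ∈ T) (hab : ¬ E a b) :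
    #T ≤ maxCompCard (cobip E) T := by
  have hcross : ((cobip E).induce (T : Set (α ⊕ β))).Reachable ⟨_, hb⟩ ⟨_, ha⟩ :=
    Adj.reachable (induce_adj.mpr hab)
  have hreach : ∀ x (hx : x ∈ T), ((cobip E).induce (T : Set (α ⊕ β))).Reachable ⟨x, hx⟩ ⟨_, ha⟩
  | .inl _, hx => (cobip_isClique_range_inl E).reachable_induce ⟨_, rfl⟩ ⟨_, rfl⟩ hx ha
  | .inr _, hx =>
    ((cobip_isClique_range_inr E).reachable_induce ⟨_, rfl⟩ ⟨_, rfl⟩ hx hb).trans hcross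
  exact card_le_maxCompCard_of_reachable _ subset_rfl fun x hx y hy =>
    (hreach x hx).trans (hreach y hy).symm

lemma rel_of_maxCompCard_lt_card {T : Finset (α ⊕ β)} (hT : maxCompCard (cobip E) T < #T) :
    ∀ a ∈ T.toLeft, ∀ b ∈ T.toRight, E a b := fun a ha b hb => by
  by_contra hab
  exact (card_le_maxCompCard_of_not_rel E (mem_toLeft.mp ha) (mem_toRight.mp hb) hab).not_gt hT

lemma div_sub_one_le_cobip_ratio [DecidableEq α] [DecidableEq β] {n k : ℕ}
    (hα : Fintype.card α = n) (hβ : Fintype.card β = n) (hkmax : ∀ m, isBalancedClique E m → m ≤ k)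
    {S : Finset (α ⊕ β)} (hS : maxCompCard (cobip E) (S : Set (α ⊕ β))ᶜ < #Sᶜ) :
    (n : ℝ) / k - 1 ≤ #S / (#Sᶜ - maxCompCard (cobip E) (S : Set (α ⊕ β))ᶜ : ℝ) := by
  rw [← coe_compl] at hS ⊢
  have hcut := card_le_maxCompCard_add_min E Sᶜ
  have hmin := hkmax _ (isBalancedClique_min E (rel_of_maxCompCard_lt_card E hS))
  have hA := hα ▸ card_le_univ (Sᶜ).toLeft
  have hB := hβ ▸ card_le_univ (Sᶜ).toRight
  have hsplit := card_toLeft_add_card_toRight (u := Sᶜ)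
  have hS' := card_add_card_compl S
  rw [Fintype.card_sum, hα, hβ] at hS'
  apply sub_one_le_div
  · exact sub_pos.mpr (by exact_mod_cast hS)
  · rw [sub_le_iff_le_add]
    exact_mod_cast (by omega : #Sᶜ ≤ k + maxCompCard (cobip E) ↑Sᶜ)
  · positivity
  · rw [sub_le_iff_le_add]
    exact_mod_cast (by omega : n ≤ #S + k)

end cobip

theorem uvat_cobip_ge_general
    {α β : Type*} [Fintype α] [Fintype β] [DecidableEq α] [DecidableEq β]
    (n : ℕ) (hcard1 : Fintype.card α = n) (hcard2 : Fintype.card β = n)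
    (E : α → β → Prop) (hE : ∃ a b, E a b)
    (k : ℕ) (hkmax : ∀ m, isBalancedClique E m → m ≤ k) :
    (n : ℝ) / (k : ℝ) - 1 ≤ uvat (cobip E) := by
  obtain ⟨a, b, hab⟩ := hE
  have hk : 1 ≤ k := by
    simpa using hkmax _ (isBalancedClique_min E (A := {a}) (B := {b}) (by simpa))
  refine le_uvat _ (fun S _ hS => div_sub_one_le_cobip_ratio E hcard1 hcard2 hkmax hS) ?_
  rcases le_or_gt n 1 with hn | hn
  · left
    rw [sub_nonpos]
    exact div_le_one_of_le₀ (by exact_mod_cast hn.trans hk) (Nat.cast_nonneg _)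
  · right
    refine exists_attack_of_not_adj Sum.inl_ne_inr (fun h => h hab) ?_
    rw [Fintype.card_sum, hcard1, hcard2]
    omega

/-- Lower bound of part (II) of the main lemma: if `k` is the size of a maximum balanced
bipartite clique of a bipartite graph `G` with parts of size `n` and at least one edge,
and the co-bipartite complement of `G` is connected, then `τ̂(Ḡ) ≥ n/k - 1`. -/
theorem uvat_cobip_ge
    {α β : Type*} [Fintype α] [Fintype β] [DecidableEq α] [DecidableEq β]
    (n : ℕ) (hcard1 : Fintype.card α = n) (hcard2 : Fintype.card β = n)
    (E : α → β → Prop) (hE : ∃ a b, E a b) (hconn : (cobip E).Connected)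
    (k : ℕ) (hk : isBalancedClique E k) (hkmax : ∀ m, isBalancedClique E m → m ≤ k) :
    (n : ℝ) / (k : ℝ) - 1 ≤ uvat (cobip E) :=
  uvat_cobip_ge_general n hcard1 hcard2 E hE k hkmax
end
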